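/- arXiv:2208.14972 — 3 statements merged into one kernel-verified Lean document; each statement's English description precedes it below -/
import Mathlib

section
/- Let I be a finite set of applicants, V : I → ℝ the job's utility from each applicant, and P : I → ℝ acceptance probabilities with 0 < P i ≤ 1 for every i. Suppose h : I → ℝ is a hiring rule (0 ≤ h i ≤ 1 for all i) and there exist distinct applicants i, i' with V i > V i', h i < 1, and h i' > 0. Then there exists ε > 0 such that the modified rule h' defined by h' i = h i + ε / P i, h' i' = h i' − ε / P i', and h' m = h m for all other m, is again a hiring rule (all values in [0,1]), has the same expected cohort size ∑_m P m · h' m = ∑_m P m · h m, and has strictly larger expected utility ∑_m V m · P m · h' m > ∑_m V m · P m · h m. -/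
/-!
Moving probability mass `ε / P i` onto `i` and `ε / P i'` off `i'` changes the expected cohort
size by `P i · ε / P i - P i' · ε / P i' = 0` and the expected utility by `(V i - V i') ε > 0`.
Taking `ε = min ((1 - h i) P i) (h i' P i')` keeps both modified values in `[0, 1]`.
-/

open Finset

section Transfer

variable {R I : Type*} [DecidableEq I]

def transfer [Add R] [Sub R] (h : I → R) (i i' : I) (δ δ' : R) : I → R := fun m =>
  if m = i then h i + δ else if m = i' then h i' - δ' else h m

theorem sum_mul_transfer_sub [CommRing R] [Fintype I] {i i' : I} (hne : i ≠ i')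
    (f h : I → R) (δ δ' : R) :
    ∑ m, f m * transfer h i i' δ δ' m - ∑ m, f m * h m = f i * δ - f i' * δ' := by
  rw [← sum_sub_distrib, Fintype.sum_eq_add i i' hne]
  · simp only [transfer, ↓reduceIte, hne.symm]
    ring
  · rintro m ⟨hmi, hmi'⟩
    simp [transfer, hmi, hmi']

theorem transfer_mem_unitInterval [Field R] [LinearOrder R] [IsStrictOrderedRing R]
    {h : I → R} (hh : ∀ m, 0 ≤ h m ∧ h m ≤ 1) {i i' : I} {δ δ' : R}
    (hδ : 0 ≤ δ) (hδi : δ ≤ 1 - h i) (hδ' : 0 ≤ δ') (hδi' : δ' ≤ h i') (m : I) :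
    0 ≤ transfer h i i' δ δ' m ∧ transfer h i i' δ δ' m ≤ 1 := by
  unfold transfer
  split_ifs
  · constructor <;> linarith [hh i]
  · constructor <;> linarith [hh i']
  · exact hh m

end Transfer

/-- Exchange step in the proof of Proposition 1 (jobs follow cutoff hiring rules):
given a hiring rule `h` on a finite set of applicants that is not monotone between
two applicants `i, i'` (with `V i > V i'`, `h i < 1`, `h i' > 0`), there is an
`ε > 0` such that shifting hiring probability from `i'` to `i` (scaled by the
acceptance probabilities) yields another hiring rule with the same expected
cohort size and strictly larger expected utility. -/
theorem exchange_step {I : Type*} [Fintype I] [DecidableEq I]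
    (V P : I → ℝ) (hP : ∀ i, 0 < P i ∧ P i ≤ 1)
    (h : I → ℝ) (hh : ∀ i, 0 ≤ h i ∧ h i ≤ 1)
    (i i' : I) (hne : i ≠ i') (hV : V i > V i')
    (hi : h i < 1) (hi' : h i' > 0) :
    ∃ ε > (0 : ℝ),
      let h' : I → ℝ := fun m =>
        if m = i then h i + ε / P i
        else if m = i' then h i' - ε / P i'
        else h m
      (∀ m, 0 ≤ h' m ∧ h' m ≤ 1) ∧
      (∑ m, P m * h' m) = (∑ m, P m * h m) ∧
      (∑ m, V m * P m * h' m) > (∑ m, V m * P m * h m) := by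
  have hPi := (hP i).1
  have hPi' := (hP i').1
  set ε := min ((1 - h i) * P i) (h i' * P i')
  have hε : 0 < ε := lt_min (mul_pos (by linarith) hPi) (mul_pos hi' hPi')
  have hεi : ε / P i ≤ 1 - h i := (div_le_iff₀ hPi).2 (min_le_left _ _)
  have hεi' : ε / P i' ≤ h i' := (div_le_iff₀ hPi').2 (min_le_right _ _)
  refine ⟨ε, hε, ?_, ?_, ?_⟩
  · exact transfer_mem_unitInterval hh (by positivity) hεi (by positivity) hεi'
  · have hsize := sum_mul_transfer_sub hne P h (ε / P i) (ε / P i')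
    rw [mul_div_cancel₀ _ hPi.ne', mul_div_cancel₀ _ hPi'.ne', sub_self] at hsize
    exact sub_eq_zero.1 hsize
  · have hutil := sum_mul_transfer_sub hne (fun m => V m * P m) h (ε / P i) (ε / P i')
    rw [mul_assoc, mul_div_cancel₀ _ hPi.ne', mul_assoc, mul_div_cancel₀ _ hPi'.ne'] at hutil
    have hgain : 0 < V i * ε - V i' * ε := by
      rw [← sub_mul]; exact mul_pos (sub_pos.2 hV) hε
    exact sub_pos.1 (hutil ▸ hgain)
end

section
/- Let I be a finite set of applicants, V : I → ℝ, P : I → ℝ with 0 < P i ≤ 1 for every i, and M ≥ 0 a hiring cap. If a hiring rule h : I → [0,1] is optimal — i.e., h is feasible (∑_i P i · h i ≤ M) and ∑_i V i · P i · h i ≥ ∑_i V i · P i · g i for every feasible hiring rule g : I → [0,1] — then h is monotone in values: for all applicants i, i', if V i > V i' and h i' > 0, then h i = 1. -/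
/-!
Exchange argument: if `V i > V i'`, `h i < 1` and `h i' > 0`, shift a small amount `ε` of expected
hires from `i'` to `i` (raise `h i` by `ε / P i`, lower `h i'` by `ε / P i'`). The expected cohort
size is unchanged while the expected utility grows by `(V i - V i') * ε > 0`, contradicting optimality.
-/

open Matrix

section Exchange

variable {I : Type*} [DecidableEq I]

theorem add_single_sub_single_mem_Icc {h : I → ℝ} (hh : ∀ j, 0 ≤ h j ∧ h j ≤ 1) {i i' : I}
    (hii' : i ≠ i') {a b : ℝ} (ha₀ : 0 ≤ a) (ha₁ : a ≤ 1 - h i) (hb₀ : 0 ≤ b) (hb₁ : b ≤ h i') :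
    ∀ j, 0 ≤ (h + Pi.single i a - Pi.single i' b : I → ℝ) j ∧
      (h + Pi.single i a - Pi.single i' b : I → ℝ) j ≤ 1 := by
  intro j
  obtain ⟨hj₀, hj₁⟩ := hh j
  rcases eq_or_ne j i with rfl | hji
  · simp only [Pi.sub_apply, Pi.add_apply, Pi.single_eq_same, Pi.single_eq_of_ne hii']
    constructor <;> linarith
  rcases eq_or_ne j i' with rfl | hji'
  · simp only [Pi.sub_apply, Pi.add_apply, Pi.single_eq_same, Pi.single_eq_of_ne hji]
    constructor <;> linarith
  · simp only [Pi.sub_apply, Pi.add_apply, Pi.single_eq_of_ne hji, Pi.single_eq_of_ne hji']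
    constructor <;> linarith

variable [Fintype I]

theorem dotProduct_add_single_sub_single (w h : I → ℝ) (i i' : I) (a b : ℝ) :
    w ⬝ᵥ (h + Pi.single i a - Pi.single i' b) = w ⬝ᵥ h + w i * a - w i' * b := by
  rw [dotProduct_sub, dotProduct_add, dotProduct_single, dotProduct_single]

theorem dotProduct_exchange (w P h : I → ℝ) {i i' : I} (hi : P i ≠ 0) (hi' : P i' ≠ 0) (ε : ℝ) :
    (w * P) ⬝ᵥ (h + Pi.single i (ε / P i) - Pi.single i' (ε / P i')) =
      (w * P) ⬝ᵥ h + (w i - w i') * ε := by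
  rw [dotProduct_add_single_sub_single, Pi.mul_apply, Pi.mul_apply]
  field_simp
  ring

end Exchange

theorem optimal_rule_monotone_general {I : Type*} [Fintype I]
    (V P : I → ℝ) (hP : ∀ i, 0 < P i ∧ P i ≤ 1)
    (M : ℝ)
    (h : I → ℝ) (hh : ∀ i, 0 ≤ h i ∧ h i ≤ 1)
    (hfeas : ∑ i, P i * h i ≤ M)
    (hopt : ∀ g : I → ℝ, (∀ i, 0 ≤ g i ∧ g i ≤ 1) →
      (∑ i, P i * g i ≤ M) →
      ∑ i, V i * P i * g i ≤ ∑ i, V i * P i * h i) :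
    ∀ i i', V i > V i' → h i' > 0 → h i = 1 := by
  classical
  intro i i' hV hi'
  by_contra hne
  have hi : h i < 1 := (hh i).2.lt_of_ne hne
  have hii' : i ≠ i' := fun e => hV.ne' (congrArg V e)
  have hPi := (hP i).1
  have hPi' := (hP i').1
  obtain ⟨ε, hε, hεi, hεi'⟩ : ∃ ε > 0, ε ≤ P i * (1 - h i) ∧ ε ≤ P i' * h i' :=
    ⟨_, lt_min (by nlinarith) (by positivity), min_le_left _ _, min_le_right _ _⟩
  set g := h + Pi.single i (ε / P i) - Pi.single i' (ε / P i')
  have hg : ∀ j, 0 ≤ g j ∧ g j ≤ 1 :=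
    add_single_sub_single_mem_Icc hh hii' (by positivity)
      ((div_le_iff₀' hPi).2 hεi) (by positivity) ((div_le_iff₀' hPi').2 hεi')
  have hsize : P ⬝ᵥ g = P ⬝ᵥ h := by
    simpa only [one_mul, Pi.one_apply, sub_self, zero_mul, add_zero] using
      dotProduct_exchange 1 P h hPi.ne' hPi'.ne' ε
  have hgain := dotProduct_exchange V P h hPi.ne' hPi'.ne' ε
  have hle : (V * P) ⬝ᵥ g ≤ (V * P) ⬝ᵥ h := hopt g hg (hsize.trans_le hfeas)
  have hpos : 0 < (V i - V i') * ε := mul_pos (sub_pos.2 hV) hε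
  linarith

/-- Monotonicity consequence of the exchange argument in the paper's
Proposition 1: an optimal hiring rule `h` (feasible under the cap `M`, and
maximizing expected utility among feasible rules) satisfies: whenever
`V i > V i'` and `h i' > 0`, we have `h i = 1`. -/
theorem optimal_rule_monotone {I : Type*} [Fintype I]
    (V P : I → ℝ) (hP : ∀ i, 0 < P i ∧ P i ≤ 1)
    (M : ℝ) (hM : 0 ≤ M)
    (h : I → ℝ) (hh : ∀ i, 0 ≤ h i ∧ h i ≤ 1)
    (hfeas : ∑ i, P i * h i ≤ M)
    (hopt : ∀ g : I → ℝ, (∀ i, 0 ≤ g i ∧ g i ≤ 1) →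
      (∑ i, P i * g i ≤ M) →
      ∑ i, V i * P i * g i ≤ ∑ i, V i * P i * h i) :
    ∀ i i', V i > V i' → h i' > 0 → h i = 1 :=
  optimal_rule_monotone_general V P hP M h hh hfeas hopt
end

section
/- Let I be a finite set and V : I → ℝ. Suppose h : I → [0,1] satisfies the monotonicity property: for all i, i' ∈ I, if V i > V i' and h i' > 0, then h i = 1. Then h admits a cutoff: there exists k ∈ ℝ such that for every i ∈ I, V i > k implies h i = 1 and V i < k implies h i = 0. -/
/-- Converting the monotonicity property into the cutoff representation of the
paper's Proposition 1: if `h : I → [0,1]` satisfies `V i > V i' → h i' > 0 →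
h i = 1`, then there is a cutoff `k` with `h i = 1` whenever `V i > k` and
`h i = 0` whenever `V i < k`. -/
theorem monotone_to_cutoff {I : Type*} [Fintype I]
    (V : I → ℝ) (h : I → ℝ) (hh : ∀ i, 0 ≤ h i ∧ h i ≤ 1)
    (hmono : ∀ i i', V i > V i' → h i' > 0 → h i = 1) :
    ∃ k : ℝ, ∀ i, (V i > k → h i = 1) ∧ (V i < k → h i = 0) := by
  classical
  set S : Finset I := Finset.univ.filter (fun i => 0 < h i) with hS
  by_cases hne : S.Nonempty
  · refine ⟨(S.image V).min' (hne.image V), fun i => ⟨?_, ?_⟩⟩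
    · intro hi
      obtain ⟨j, hj, hjv⟩ := Finset.mem_image.mp
        ((S.image V).min'_mem (hne.image V))
      exact hmono i j (hjv ▸ hi) (Finset.mem_filter.mp hj).2
    · intro hi
      by_contra hne0
      have hpos : 0 < h i := lt_of_le_of_ne (hh i).1 (Ne.symm hne0)
      have : (S.image V).min' (hne.image V) ≤ V i :=
        Finset.min'_le _ _ (Finset.mem_image_of_mem V
          (Finset.mem_filter.mpr ⟨Finset.mem_univ i, hpos⟩))
      linarith
  · by_cases hI : Nonempty I
    · refine ⟨(Finset.univ.image V).max' ((Finset.univ_nonempty).image V), fun i => ⟨?_, ?_⟩⟩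
      · intro hi
        exact absurd (Finset.le_max' _ _ (Finset.mem_image_of_mem V (Finset.mem_univ i)))
          (not_le.mpr hi)
      · intro _
        by_contra hne0
        have hpos : 0 < h i := lt_of_le_of_ne (hh i).1 (Ne.symm hne0)
        exact hne ⟨i, Finset.mem_filter.mpr ⟨Finset.mem_univ i, hpos⟩⟩
    · exact ⟨0, fun i => absurd ⟨i⟩ hI⟩
end
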